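/- Let λ : ℝ^{2n} → ℝ and P : ℝ^{2n} → M_m(ℂ) be smooth with P² = P pointwise, and let W : ℝ^{2n} → M_m(ℂ) be smooth with [W, P] = 0 pointwise. Then (1/2) P ( {λP, W} − {W, λP} ) P = {λ, PWP} − [ PWP, (λ/2) P{P,P}P + [P, {λ,P}] ], where {F,G} := ∂_ξ F ∂_x G − ∂_x F ∂_ξ G and [·,·] is the matrix commutator. -/

import Mathlib

noncomputable section
open scoped Matrix
attribute [local instance] Matrix.linftyOpNormedRing Matrix.linftyOpNormedAlgebra

/-- The coordinate vector `(e_k, 0)` in `ℝ^n × ℝ^n` (an `x`-direction). -/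
def ex (n : ℕ) (k : Fin n) : (Fin n → ℝ) × (Fin n → ℝ) := (Pi.single k 1, 0)

/-- The coordinate vector `(0, e_k)` in `ℝ^n × ℝ^n` (a `ξ`-direction). -/
def eXi (n : ℕ) (k : Fin n) : (Fin n → ℝ) × (Fin n → ℝ) := (0, Pi.single k 1)

/-- The Poisson bracket `{λ, G} = ∂_ξ λ ∂_x G − ∂_x λ ∂_ξ G` of a scalar function with a
matrix-valued function on `ℝ^{2n}`. -/
def scalarPoisson (n m : ℕ) (lam : (Fin n → ℝ) × (Fin n → ℝ) → ℝ)
    (G : (Fin n → ℝ) × (Fin n → ℝ) → Matrix (Fin m) (Fin m) ℂ)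
    (p : (Fin n → ℝ) × (Fin n → ℝ)) : Matrix (Fin m) (Fin m) ℂ :=
  ∑ k : Fin n,
    ((fderiv ℝ lam p (eXi n k)) • (fderiv ℝ G p (ex n k)) -
      (fderiv ℝ lam p (ex n k)) • (fderiv ℝ G p (eXi n k)))

/-- The (non-antisymmetric) Poisson bracket `{F, G} = ∂_ξ F ∂_x G − ∂_x F ∂_ξ G` of two
matrix-valued functions on `ℝ^{2n}`. -/
def matPoisson (n m : ℕ)
    (F G : (Fin n → ℝ) × (Fin n → ℝ) → Matrix (Fin m) (Fin m) ℂ)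
    (p : (Fin n → ℝ) × (Fin n → ℝ)) : Matrix (Fin m) (Fin m) ℂ :=
  ∑ k : Fin n,
    ((fderiv ℝ F p (eXi n k)) * (fderiv ℝ G p (ex n k)) -
      (fderiv ℝ F p (ex n k)) * (fderiv ℝ G p (eXi n k)))


theorem spohn_fderiv_mul_apply' {E : Type*} [NormedAddCommGroup E] [NormedSpace ℝ E]
    {𝔸 : Type*} [NormedRing 𝔸] [NormedAlgebra ℝ 𝔸] {f g : E → 𝔸} {p : E}
    (hf : DifferentiableAt ℝ f p) (hg : DifferentiableAt ℝ g p) (v : E) :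
    fderiv ℝ (fun q => f q * g q) p v = f p * fderiv ℝ g p v + fderiv ℝ f p v * g p := by
  rw [fderiv_fun_mul' hf hg]
  simp [smul_eq_mul]

theorem spohn_key {R : Type*} [Ring R] [Algebra ℝ R] (l lu lv : ℝ) (P W A B Wu Wv : R)
    (h1 : P*P = P) (h2 : A*P + P*A = A) (h3 : B*P + P*B = B) (h4 : W*P = P*W)
    (h5 : Wu*P + W*A = A*W + P*Wu) (h6 : Wv*P + W*B = B*W + P*Wv) :
    (1/2 : ℝ) • (P * (((l•A + lu•P)*Wv - (l•B + lv•P)*Wu) - (Wu*(l•B + lv•P) - Wv*(l•A + lu•P))) * P)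
      = (lu • ((P*W)*B + (P*Wv + B*W)*P) - lv • ((P*W)*A + (P*Wu + A*W)*P))
        - ((P*W*P) * ((l/2) • (P*(A*B - B*A)*P) + (P*(lu•B - lv•A) - (lu•B - lv•A)*P))
           - ((l/2) • (P*(A*B - B*A)*P) + (P*(lu•B - lv•A) - (lu•B - lv•A)*P)) * (P*W*P)) := by
  linear_combination (norm := (simp only [smul_add, smul_sub, smul_smul, mul_add, add_mul, mul_sub,
      sub_mul, smul_mul_assoc, mul_smul_comm, mul_assoc]; module))
      ((1/2 : ℝ)*l) • (P*A*h6) +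
      ((1 : ℝ)*lu) • (h1*Wv*P) +
      ((-1/2 : ℝ)*l) • (P*B*h5) +
      ((-1 : ℝ)*lv) • (h1*Wu*P) +
      ((-1/2 : ℝ)*l) • (P*Wu*h3) +
      ((-1/2 : ℝ)*lv) • (P*h5*P) +
      ((1/2 : ℝ)*l) • (P*Wv*h2) +
      ((1/2 : ℝ)*lu) • (P*h6*P) +
      ((1/2 : ℝ)*l) • (P*h4*P*A*B*P) +
      ((-1/2 : ℝ)*l) • (P*h4*P*B*A*P) +
      ((1 : ℝ)*lu) • (P*h4*P*B) +
      ((-1 : ℝ)*lv) • (P*h4*P*A) +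
      ((-1 : ℝ)*lu) • (P*h4*B*P) +
      ((1 : ℝ)*lv) • (P*h4*A*P) +
      ((-1/2 : ℝ)*l) • (P*A*h3*P*W*P) +
      ((1/2 : ℝ)*l) • (P*B*h2*P*W*P) +
      ((-2 : ℝ)*lu) • (P*h3*W*P) +
      ((2 : ℝ)*lv) • (P*h2*W*P) +
      ((1 : ℝ)*lu) • (h3*P*W*P) +
      ((-1 : ℝ)*lv) • (h2*P*W*P) +
      ((1/2 : ℝ)*l) • (P*h2*Wv) +
      ((-1/2 : ℝ)*l) • (P*h3*Wu) +
      ((1/2 : ℝ)*l) • (P*h5*B) +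
      ((1/2 : ℝ)*lv) • (P*A*h4) +
      ((3/2 : ℝ)*lv) • (P*W*h2) +
      ((-1/2 : ℝ)*l) • (P*h6*A) +
      ((-1/2 : ℝ)*lu) • (P*B*h4) +
      ((-3/2 : ℝ)*lu) • (P*W*h3) +
      ((1/2 : ℝ)*l) • (h1*W*P*A*B*P) +
      ((-1/2 : ℝ)*l) • (h1*W*P*B*A*P) +
      ((1 : ℝ)*lu) • (h1*W*P*B) +
      ((-1 : ℝ)*lv) • (h1*W*P*A) +
      ((-1 : ℝ)*lu) • (h1*W*B*P) +
      ((1 : ℝ)*lv) • (h1*W*A*P) +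
      ((-1/2 : ℝ)*l) • (P*A*h3*W*P) +
      ((1/2 : ℝ)*l) • (P*h2*B*P*W*P) +
      ((1/2 : ℝ)*l) • (P*B*h2*W*P) +
      ((-1/2 : ℝ)*l) • (P*h3*A*P*W*P) +
      ((2 : ℝ)*lu) • (h1*B*W*P) +
      ((-2 : ℝ)*lv) • (h1*A*W*P) +
      ((1 : ℝ)*lu) • (h3*W*P) +
      ((-1 : ℝ)*lv) • (h2*W*P) +
      ((-1/2 : ℝ)*l) • (h1*A*Wv) +
      ((1/2 : ℝ)*l) • (h1*B*Wu) +
      ((1/2 : ℝ)*l) • (h1*Wu*B) +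
      ((1/2 : ℝ)*lv) • (P*h2*W) +
      ((-5/2 : ℝ)*lv) • (P*h4*A) +
      ((-1/2 : ℝ)*l) • (h1*Wv*A) +
      ((-1/2 : ℝ)*lu) • (P*h3*W) +
      ((5/2 : ℝ)*lu) • (P*h4*B) +
      ((1/2 : ℝ)*l) • (P*h4*A*B*P) +
      ((-1/2 : ℝ)*l) • (P*h4*B*A*P) +
      ((-1/2 : ℝ)*l) • (P*A*B*h4) +
      ((1/2 : ℝ)*l) • (P*h2*B*W*P) +
      ((-1/2 : ℝ)*l) • (h1*A*B*P*W*P) +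
      ((1/2 : ℝ)*l) • (P*B*A*h4) +
      ((-1/2 : ℝ)*l) • (P*h3*A*W*P) +
      ((1/2 : ℝ)*l) • (h1*B*A*P*W*P) +
      ((-1/2 : ℝ)*lv) • (h1*A*W) +
      ((-5/2 : ℝ)*lv) • (h1*W*A) +
      ((1/2 : ℝ)*lu) • (h1*B*W) +
      ((5/2 : ℝ)*lu) • (h1*W*B) +
      ((1/2 : ℝ)*l) • (h1*W*A*B*P) +
      ((-1/2 : ℝ)*l) • (h1*W*B*A*P) +
      ((-1/2 : ℝ)*l) • (P*A*h3*W) +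
      ((-1/2 : ℝ)*l) • (h1*A*B*W*P) +
      ((1/2 : ℝ)*l) • (P*B*h2*W) +
      ((1/2 : ℝ)*l) • (h1*B*A*W*P) +
      ((1/2 : ℝ)*l) • (P*W*A*h3) +
      ((-1/2 : ℝ)*l) • (P*W*B*h2) +
      ((1/2 : ℝ)*l) • (P*h2*B*W) +
      ((-1/2 : ℝ)*l) • (P*h3*A*W) +
      ((-1/2 : ℝ)*l) • (P*W*h2*B) +
      ((1/2 : ℝ)*l) • (P*W*h3*A) +
      ((-1/2 : ℝ)*l) • (h1*A*B*W) +
      ((1/2 : ℝ)*l) • (h1*B*A*W) +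
      ((1/2 : ℝ)*l) • (P*h4*A*B) +
      ((-1/2 : ℝ)*l) • (P*h4*B*A) +
      ((1/2 : ℝ)*l) • (h1*W*A*B) +
      ((-1/2 : ℝ)*l) • (h1*W*B*A)


/-- the Spohn-type identity
`(1/2) P ({λP, W} − {W, λP}) P = {λ, PWP} − [PWP, (λ/2) P{P,P}P + [P,{λ,P}]]`
for a smooth idempotent field `P`, a smooth `W` commuting pointwise with `P`, and a smooth
real scalar `λ`. -/
theorem spohn_identity
    (n m : ℕ) (lam : (Fin n → ℝ) × (Fin n → ℝ) → ℝ)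
    (P W : (Fin n → ℝ) × (Fin n → ℝ) → Matrix (Fin m) (Fin m) ℂ)
    (hlam : ContDiff ℝ (⊤ : ℕ∞) lam) (hP : ContDiff ℝ (⊤ : ℕ∞) P) (hW : ContDiff ℝ (⊤ : ℕ∞) W)
    (hidem : ∀ p, P p * P p = P p)
    (hcomm : ∀ p, W p * P p = P p * W p) :
    ∀ p,
      (1 / 2 : ℝ) •
          (P p * (matPoisson n m (fun q => lam q • P q) W p -
              matPoisson n m W (fun q => lam q • P q) p) * P p) =
        scalarPoisson n m lam (fun q => P q * W q * P q) p -
          ((P p * W p * P p) *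
              ((lam p / 2) • (P p * matPoisson n m P P p * P p) +
                (P p * scalarPoisson n m lam P p - scalarPoisson n m lam P p * P p)) -
            ((lam p / 2) • (P p * matPoisson n m P P p * P p) +
                (P p * scalarPoisson n m lam P p - scalarPoisson n m lam P p * P p)) *
              (P p * W p * P p)) := by
  intro p
  have hPd : Differentiable ℝ P := hP.differentiable (by simp)
  have hWd : Differentiable ℝ W := hW.differentiable (by simp)
  have hld : Differentiable ℝ lam := hlam.differentiable (by simp)
  have hPW : DifferentiableAt ℝ (fun q => P q * W q) p := (hPd p).mul (hWd p)
  have hidem' : ∀ v, fderiv ℝ P p v * P p + P p * fderiv ℝ P p v = fderiv ℝ P p v := by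
    intro v
    have hfun : (fun q => P q * P q) = P := funext hidem
    have h := spohn_fderiv_mul_apply' (hPd p) (hPd p) v
    rw [hfun] at h
    rw [add_comm]
    exact h.symm
  have hcomm' : ∀ v, fderiv ℝ W p v * P p + W p * fderiv ℝ P p v
      = fderiv ℝ P p v * W p + P p * fderiv ℝ W p v := by
    intro v
    have hfun : (fun q => W q * P q) = (fun q => P q * W q) := funext hcomm
    have h1 := spohn_fderiv_mul_apply' (hWd p) (hPd p) v
    have h2 := spohn_fderiv_mul_apply' (hPd p) (hWd p) v
    rw [hfun, h2] at h1
    rw [add_comm (fderiv ℝ W p v * P p), add_comm (fderiv ℝ P p v * W p)]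
    exact h1.symm
  have hsP : ∀ v, fderiv ℝ (fun q => lam q • P q) p v
      = lam p • fderiv ℝ P p v + fderiv ℝ lam p v • P p := by
    intro v
    erw [fderiv_fun_smul (hld p) (hPd p)]
    rfl
  have hPWP : ∀ v, fderiv ℝ (fun q => P q * W q * P q) p v
      = (P p * W p) * fderiv ℝ P p v + (P p * fderiv ℝ W p v + fderiv ℝ P p v * W p) * P p := by
    intro v
    have h := spohn_fderiv_mul_apply' (f := fun q => P q * W q) (g := P) hPW (hPd p) v
    rw [spohn_fderiv_mul_apply' (hPd p) (hWd p) v] at h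
    exact h
  simp only [matPoisson, scalarPoisson, Finset.mul_sum, Finset.sum_mul, Finset.smul_sum,
    ← Finset.sum_sub_distrib, ← Finset.sum_add_distrib]
  refine Finset.sum_congr rfl fun k _ => ?_
  simp only [hsP, hPWP]
  exact spohn_key (lam p) (fderiv ℝ lam p (eXi n k)) (fderiv ℝ lam p (ex n k))
    (P p) (W p) (fderiv ℝ P p (eXi n k)) (fderiv ℝ P p (ex n k))
    (fderiv ℝ W p (eXi n k)) (fderiv ℝ W p (ex n k))
    (hidem p) (hidem' (eXi n k)) (hidem' (ex n k)) (hcomm p)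
    (hcomm' (eXi n k)) (hcomm' (ex n k))
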